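/- arXiv:2407.18685 — 4 statements merged into one kernel-verified Lean document; each statement's English description precedes it below -/
import Mathlib

section
/- For natural numbers ν > k ≥ 1, the ratio (ν-k)!/ν! is at most ν^{-k} · exp(k²/ν + 1/(12(ν-k))). -/
/-! Since `(1 + 1/n)^n ≤ e`, the sequence `n^n / (eⁿ n!)` is nonincreasing, so
`ν^ν m! ≤ e^(ν-m) m^m ν!` for `m ≤ ν`. Bounding `m^m ≤ ν^m e^(m(m/ν - 1))` by `1 + x ≤ eˣ`
turns this into `ν^k (ν-k)! ≤ e^(k²/ν) ν!`. -/

open Real Nat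

lemma pow_le_pow_mul_exp {x y : ℝ} (hx : 0 ≤ x) (hy : 0 < y) (n : ℕ) :
    x ^ n ≤ y ^ n * exp (n * (x / y - 1)) := by
  have hxy : x ≤ y * exp (x / y - 1) := by
    have := add_one_le_exp (x / y - 1)
    rw [sub_add_cancel, div_le_iff₀ hy] at this
    linarith
  calc x ^ n ≤ (y * exp (x / y - 1)) ^ n := pow_le_pow_left₀ hx hxy n
    _ = y ^ n * exp (n * (x / y - 1)) := by rw [mul_pow, exp_nat_mul]

lemma succ_pow_le_exp_one_mul_pow (n : ℕ) : ((n : ℝ) + 1) ^ n ≤ exp 1 * (n : ℝ) ^ n := by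
  rcases n.eq_zero_or_pos with rfl | hn
  · simp [one_le_exp zero_le_one]
  · have hn' : (0 : ℝ) < n := by exact_mod_cast hn
    calc ((n : ℝ) + 1) ^ n = (n : ℝ) ^ n * (1 + (n : ℝ)⁻¹) ^ n := by
          rw [← mul_pow, mul_add, mul_inv_cancel₀ hn'.ne', mul_one]
      _ ≤ (n : ℝ) ^ n * exp 1 := by gcongr; exact one_add_inv_pow_le_exp
      _ = exp 1 * (n : ℝ) ^ n := mul_comm _ _

lemma pow_self_mul_factorial_le {m n : ℕ} (h : m ≤ n) :
    (n : ℝ) ^ n * m ! ≤ exp (n - m) * (m : ℝ) ^ m * n ! := by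
  induction n, h using Nat.le_induction with
  | base => simp
  | succ n _ ih =>
    calc ((n + 1 : ℕ) : ℝ) ^ (n + 1) * m !
        = ((n : ℝ) + 1) * ((n : ℝ) + 1) ^ n * m ! := by push_cast; ring
      _ ≤ ((n : ℝ) + 1) * (exp 1 * (n : ℝ) ^ n) * m ! := by
          gcongr; exact succ_pow_le_exp_one_mul_pow n
      _ = ((n : ℝ) + 1) * exp 1 * ((n : ℝ) ^ n * m !) := by ring
      _ ≤ ((n : ℝ) + 1) * exp 1 * (exp (n - m) * (m : ℝ) ^ m * n !) := by gcongr
      _ = exp ((n + 1 : ℕ) - m) * (m : ℝ) ^ m * (n + 1)! := by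
          rw [factorial_succ]; push_cast; rw [add_sub_right_comm, exp_add]; ring

lemma pow_sub_mul_factorial_le {m n : ℕ} (h : m ≤ n) :
    (n : ℝ) ^ (n - m) * m ! ≤ exp (((n : ℝ) - m) ^ 2 / n) * n ! := by
  rcases n.eq_zero_or_pos with rfl | hn
  · obtain rfl : m = 0 := by omega
    simp
  have hn' : (0 : ℝ) < n := by exact_mod_cast hn
  have hexp : ((n : ℝ) - m) + m * (m / n - 1) = ((n : ℝ) - m) ^ 2 / n := by
    field_simp; ring
  refine le_of_mul_le_mul_left ?_ (pow_pos hn' m)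
  calc (n : ℝ) ^ m * ((n : ℝ) ^ (n - m) * m !) = (n : ℝ) ^ n * m ! := by
        rw [← mul_assoc, ← pow_add, Nat.add_sub_cancel' h]
    _ ≤ exp (n - m) * (m : ℝ) ^ m * n ! := pow_self_mul_factorial_le h
    _ ≤ exp (n - m) * ((n : ℝ) ^ m * exp (m * (m / n - 1))) * n ! := by
        gcongr; exact pow_le_pow_mul_exp (Nat.cast_nonneg m) hn' m
    _ = (n : ℝ) ^ m * (exp (((n : ℝ) - m) ^ 2 / n) * n !) := by
        rw [← hexp, exp_add]; ring

theorem factorial_ratio_le_general (ν k : ℕ) (hkν : k < ν) :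
    ((ν - k).factorial : ℝ) / (ν.factorial : ℝ) ≤
      (ν : ℝ) ^ (-(k : ℝ)) *
        Real.exp ((k : ℝ) ^ 2 / (ν : ℝ) + 1 / (12 * ((ν : ℝ) - (k : ℝ)))) := by
  have hν : (0 : ℝ) < ν := by exact_mod_cast hkν.trans_le' (Nat.zero_le k)
  have hsub : (ν : ℝ) - (ν - k : ℕ) = k := by push_cast [hkν.le]; ring
  have key := pow_sub_mul_factorial_le (Nat.sub_le ν k)
  rw [Nat.sub_sub_self hkν.le, hsub] at key
  have hcorr : (0 : ℝ) ≤ 1 / (12 * ((ν : ℝ) - k)) := by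
    have : (k : ℝ) ≤ ν := by exact_mod_cast hkν.le
    exact one_div_nonneg.mpr (by linarith)
  calc ((ν - k)! : ℝ) / ν ! ≤ exp ((k : ℝ) ^ 2 / ν) / (ν : ℝ) ^ k := by
        rw [div_le_div_iff₀ (by positivity) (by positivity), mul_comm]
        exact key
    _ = (ν : ℝ) ^ (-(k : ℝ)) * exp ((k : ℝ) ^ 2 / ν) := by
        rw [rpow_neg hν.le, rpow_natCast, div_eq_inv_mul]
    _ ≤ (ν : ℝ) ^ (-(k : ℝ)) * exp ((k : ℝ) ^ 2 / ν + 1 / (12 * ((ν : ℝ) - k))) := by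
        gcongr
        exact le_add_of_nonneg_right hcorr

theorem factorial_ratio_le (ν k : ℕ) (hk : 1 ≤ k) (hkν : k < ν) :
    ((ν - k).factorial : ℝ) / (ν.factorial : ℝ) ≤
      (ν : ℝ) ^ (-(k : ℝ)) *
        Real.exp ((k : ℝ) ^ 2 / (ν : ℝ) + 1 / (12 * ((ν : ℝ) - (k : ℝ)))) :=
  factorial_ratio_le_general ν k hkν
end

section
/- Let m ≥ 1 be an integer, δ₀, δ₁ > -m reals, and define S_{t,i-1}(δ) = (2m+δ)t - 2m + i - 1. Then for integers 3 ≤ τ ≤ n, the product over t from τ+1 to n and i from 1 to m of S_{t,i-1}(δ₀)/S_{t,i-1}(δ₁) lies between e^{-6mΔ/τ}·((2m+δ₀)/(2m+δ₁))^{mΔ} and e^{6mΔ/τ}·((2m+δ₀)/(2m+δ₁))^{mΔ}, where Δ = n - τ. -/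
open Finset

noncomputable def Spa (m t j : ℕ) (δ : ℝ) : ℝ :=
  (2 * m + δ) * t - 2 * m + j

-- cleared-denominator key inequality
lemma aux_key (m τ t j : ℕ) (hm : 1 ≤ m) (hτ : 3 ≤ τ) (ht : τ + 1 ≤ t)
    (A B : ℝ) (hA : (m : ℝ) < A) (hB : (m : ℝ) < B) (hj : (j : ℝ) ≤ m) :
    (A * t - 2 * m + j) * B ≤ (1 + 6 / τ) * ((B * t - 2 * m + j) * A) := by
  have hm' : (1 : ℝ) ≤ m := by exact_mod_cast hm
  have hτ' : (3 : ℝ) ≤ τ := by exact_mod_cast hτ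
  have ht' : (τ : ℝ) + 1 ≤ t := by exact_mod_cast ht
  have hj0 : (0 : ℝ) ≤ j := Nat.cast_nonneg j
  have hτ0 : (0 : ℝ) < τ := by linarith
  have hA0 : (0 : ℝ) < A := by linarith
  have hB0 : (0 : ℝ) < B := by linarith
  have key : (τ : ℝ) * ((A * t - 2 * m + j) * B) ≤ ((τ : ℝ) + 6) * ((B * t - 2 * m + j) * A) := by
    nlinarith [mul_nonneg (mul_nonneg hA0.le (sub_nonneg.2 hB.le)) (by linarith : (0:ℝ) ≤ (t:ℝ)),
      mul_nonneg (mul_nonneg hA0.le (by linarith : (0:ℝ) ≤ (m:ℝ))) (by linarith : (0:ℝ) ≤ (t:ℝ) - τ - 1),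
      mul_nonneg hj0 (mul_nonneg (by linarith : (0:ℝ) ≤ (τ:ℝ) + 6) hA0.le),
      mul_nonneg (mul_nonneg (by linarith : (0:ℝ) ≤ 2*(m:ℝ) - j) hτ0.le) hB0.le,
      mul_nonneg (mul_nonneg (by linarith : (0:ℝ) ≤ 4*(τ:ℝ) - 6) (by linarith : (0:ℝ) ≤ (m:ℝ))) hA0.le]
  have h1 : (1 + 6 / (τ : ℝ)) = ((τ : ℝ) + 6) / τ := by field_simp
  rw [h1, div_mul_eq_mul_div, le_div_iff₀ hτ0]
  linarith [key]

lemma Spa_pos' (m τ t j : ℕ) (hm : 1 ≤ m) (hτ : 3 ≤ τ) (ht : τ + 1 ≤ t)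
    (A : ℝ) (hA : (m : ℝ) < A) : 0 < A * t - 2 * m + j := by
  have hm' : (1 : ℝ) ≤ m := by exact_mod_cast hm
  have ht' : (4 : ℝ) ≤ t := by exact_mod_cast (le_trans (by omega) ht)
  have hj0 : (0 : ℝ) ≤ j := Nat.cast_nonneg j
  nlinarith

-- upper bound per factor (general in A B)
lemma upper (m τ t j : ℕ) (hm : 1 ≤ m) (hτ : 3 ≤ τ) (ht : τ + 1 ≤ t)
    (A B : ℝ) (hA : (m : ℝ) < A) (hB : (m : ℝ) < B) (hj : (j : ℝ) ≤ m) :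
    (A * t - 2 * m + j) / (B * t - 2 * m + j) ≤ Real.exp (6 / τ) * (A / B) := by
  have hm' : (1 : ℝ) ≤ m := by exact_mod_cast hm
  have hτ' : (3 : ℝ) ≤ τ := by exact_mod_cast hτ
  have hτ0 : (0 : ℝ) < τ := by linarith
  have hA0 : (0 : ℝ) < A := by linarith
  have hB0 : (0 : ℝ) < B := by linarith
  have hS1 : (0 : ℝ) < B * t - 2 * m + j := Spa_pos' m τ t j hm hτ ht B hB
  have key := aux_key m τ t j hm hτ ht A B hA hB hj
  have hexp : 1 + 6 / (τ : ℝ) ≤ Real.exp (6 / τ) := by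
    have := Real.add_one_le_exp (6 / (τ : ℝ)); linarith
  have step1 : (A * t - 2 * m + j) / (B * t - 2 * m + j) ≤ (1 + 6 / τ) * (A / B) := by
    rw [show (1 + 6 / (τ:ℝ)) * (A / B) = ((1 + 6 / τ) * A) / B from by ring,
      div_le_div_iff₀ hS1 hB0]
    have heq : (1 + 6 / (τ:ℝ)) * A * (B * t - 2 * m + j)
        = (1 + 6 / τ) * ((B * t - 2 * m + j) * A) := by ring
    linarith [key]
  have step2 : (1 + 6 / (τ:ℝ)) * (A / B) ≤ Real.exp (6 / τ) * (A / B) := by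
    apply mul_le_mul_of_nonneg_right hexp (div_nonneg hA0.le hB0.le)
  linarith


theorem prod_S_ratio_bounds (m : ℕ) (hm : 1 ≤ m) (δ₀ δ₁ : ℝ)
    (hδ₀ : -(m : ℝ) < δ₀) (hδ₁ : -(m : ℝ) < δ₁)
    (τ n : ℕ) (hτ : 3 ≤ τ) (hτn : τ ≤ n) :
    Real.exp (-(6 * m * (n - τ : ℕ) : ℝ) / τ) *
        ((2 * m + δ₀) / (2 * m + δ₁)) ^ (m * (n - τ)) ≤
      (∏ t ∈ Finset.Icc (τ + 1) n, ∏ i ∈ Finset.Icc 1 m,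
        Spa m t (i - 1) δ₀ / Spa m t (i - 1) δ₁) ∧
    (∏ t ∈ Finset.Icc (τ + 1) n, ∏ i ∈ Finset.Icc 1 m,
        Spa m t (i - 1) δ₀ / Spa m t (i - 1) δ₁) ≤
      Real.exp ((6 * m * (n - τ : ℕ) : ℝ) / τ) *
        ((2 * m + δ₀) / (2 * m + δ₁)) ^ (m * (n - τ)) := by
  have hm' : (1 : ℝ) ≤ m := by exact_mod_cast hm
  have hτ' : (3 : ℝ) ≤ τ := by exact_mod_cast hτ
  have hτ0 : (0 : ℝ) < τ := by linarith
  have hA : (m : ℝ) < 2 * m + δ₀ := by linarith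
  have hB : (m : ℝ) < 2 * m + δ₁ := by linarith
  have hA0 : (0 : ℝ) < 2 * m + δ₀ := by linarith
  have hB0 : (0 : ℝ) < 2 * m + δ₁ := by linarith
  have hr0 : (0 : ℝ) < (2 * m + δ₀) / (2 * m + δ₁) := div_pos hA0 hB0
  set r : ℝ := (2 * m + δ₀) / (2 * m + δ₁) with hrdef
  -- per-factor bounds
  have hjle : ∀ i ∈ Finset.Icc 1 m, ((i - 1 : ℕ) : ℝ) ≤ m := by
    intro i hi
    rw [Finset.mem_Icc] at hi
    have : i - 1 ≤ m := by omega
    exact_mod_cast this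
  have hS0pos : ∀ t ∈ Finset.Icc (τ + 1) n, ∀ i ∈ Finset.Icc 1 m, 0 < Spa m t (i - 1) δ₀ := by
    intro t ht i hi
    rw [Finset.mem_Icc] at ht
    exact Spa_pos' m τ t (i - 1) hm hτ ht.1 _ hA
  have hS1pos : ∀ t ∈ Finset.Icc (τ + 1) n, ∀ i ∈ Finset.Icc 1 m, 0 < Spa m t (i - 1) δ₁ := by
    intro t ht i hi
    rw [Finset.mem_Icc] at ht
    exact Spa_pos' m τ t (i - 1) hm hτ ht.1 _ hB
  have hub : ∀ t ∈ Finset.Icc (τ + 1) n, ∀ i ∈ Finset.Icc 1 m,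
      Spa m t (i - 1) δ₀ / Spa m t (i - 1) δ₁ ≤ Real.exp (6 / τ) * r := by
    intro t ht i hi
    rw [Finset.mem_Icc] at ht
    have := upper m τ t (i - 1) hm hτ ht.1 (2 * m + δ₀) (2 * m + δ₁) hA hB (hjle i hi)
    simpa [Spa, hrdef] using this
  have hlb : ∀ t ∈ Finset.Icc (τ + 1) n, ∀ i ∈ Finset.Icc 1 m,
      Real.exp (-(6 / τ)) * r ≤ Spa m t (i - 1) δ₀ / Spa m t (i - 1) δ₁ := by
    intro t ht i hi
    have hS0 := hS0pos t ht i hi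
    have hS1 := hS1pos t ht i hi
    rw [Finset.mem_Icc] at ht
    have h := upper m τ t (i - 1) hm hτ ht.1 (2 * m + δ₁) (2 * m + δ₀) hB hA (hjle i hi)
    have h' : Spa m t (i - 1) δ₁ / Spa m t (i - 1) δ₀ ≤
        Real.exp (6 / τ) * ((2 * m + δ₁) / (2 * m + δ₀)) := by
      simpa [Spa] using h
    have hpos : 0 < Spa m t (i - 1) δ₁ / Spa m t (i - 1) δ₀ := div_pos hS1 hS0
    have hinv := inv_anti₀ hpos h'
    calc Real.exp (-(6 / (τ:ℝ))) * r
        = (Real.exp (6 / τ) * ((2 * m + δ₁) / (2 * m + δ₀)))⁻¹ := by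
          rw [mul_inv, inv_div, Real.exp_neg, hrdef]
      _ ≤ (Spa m t (i - 1) δ₁ / Spa m t (i - 1) δ₀)⁻¹ := hinv
      _ = Spa m t (i - 1) δ₀ / Spa m t (i - 1) δ₁ := by rw [inv_div]
  have card1 : (Finset.Icc (τ + 1) n).card = n - τ := by rw [Nat.card_Icc]; omega
  have card2 : (Finset.Icc 1 m).card = m := by rw [Nat.card_Icc]; omega
  have hexp_ub : (Real.exp (6 / (τ:ℝ)) * r) ^ (m * (n - τ)) =
      Real.exp ((6 * m * (n - τ : ℕ) : ℝ) / τ) * r ^ (m * (n - τ)) := by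
    rw [mul_pow, ← Real.exp_nat_mul]
    congr 1
    push_cast
    ring
  have hexp_lb : (Real.exp (-(6 / (τ:ℝ))) * r) ^ (m * (n - τ)) =
      Real.exp (-(6 * m * (n - τ : ℕ) : ℝ) / τ) * r ^ (m * (n - τ)) := by
    rw [mul_pow, ← Real.exp_nat_mul]
    congr 1
    push_cast
    ring
  constructor
  · calc Real.exp (-(6 * m * (n - τ : ℕ) : ℝ) / τ) * r ^ (m * (n - τ))
        = (Real.exp (-(6 / (τ:ℝ))) * r) ^ (m * (n - τ)) := hexp_lb.symm
      _ = ∏ t ∈ Finset.Icc (τ + 1) n, ∏ i ∈ Finset.Icc 1 m, (Real.exp (-(6 / (τ:ℝ))) * r) := by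
          rw [Finset.prod_const, Finset.prod_const, card1, card2, ← pow_mul]
      _ ≤ ∏ t ∈ Finset.Icc (τ + 1) n, ∏ i ∈ Finset.Icc 1 m,
            Spa m t (i - 1) δ₀ / Spa m t (i - 1) δ₁ := by
          apply Finset.prod_le_prod
          · intro t ht
            apply Finset.prod_nonneg
            intro i hi
            positivity
          · intro t ht
            apply Finset.prod_le_prod
            · intro i hi; positivity
            · intro i hi; exact hlb t ht i hi
  · calc (∏ t ∈ Finset.Icc (τ + 1) n, ∏ i ∈ Finset.Icc 1 m,
            Spa m t (i - 1) δ₀ / Spa m t (i - 1) δ₁)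
        ≤ ∏ t ∈ Finset.Icc (τ + 1) n, ∏ i ∈ Finset.Icc 1 m, (Real.exp (6 / (τ:ℝ)) * r) := by
          apply Finset.prod_le_prod
          · intro t ht
            apply Finset.prod_nonneg
            intro i hi
            exact div_nonneg (hS0pos t ht i hi).le (hS1pos t ht i hi).le
          · intro t ht
            apply Finset.prod_le_prod
            · intro i hi
              exact div_nonneg (hS0pos t ht i hi).le (hS1pos t ht i hi).le
            · intro i hi; exact hub t ht i hi
      _ = (Real.exp (6 / (τ:ℝ)) * r) ^ (m * (n - τ)) := by
          rw [Finset.prod_const, Finset.prod_const, card1, card2, ← pow_mul]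
      _ = Real.exp ((6 * m * (n - τ : ℕ) : ℝ) / τ) * r ^ (m * (n - τ)) := hexp_ub
end

section
/- The function x ↦ x·log(1 + c/x) is strictly concave on (0, ∞) for every nonzero real c with c > -x for all relevant x (i.e., on the domain where 1 + c/x > 0). -/
/-!
`x ↦ x * g (c / x)` is the perspective `(x, t) ↦ x * g (t / x)` of `g` on the line `t = c`.
For `z = a x + b y` the weights `a x / z` and `b y / z` form a convex combination sending
`c / x`, `c / y` to `c / z`, so multiplying the strict concavity inequality of `g` at these
weights by `z` gives that of the perspective. The theorem is the case
`g = log (1 + ·)`, strictly concave on `(-1, ∞)`.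
-/

open Set

section Perspective

variable {𝕜 : Type*} [Field 𝕜] [LinearOrder 𝕜] [IsStrictOrderedRing 𝕜] {s : Set 𝕜} {c : 𝕜}

lemma perspective_weights {a b x y : 𝕜} (hx : 0 < x) (hy : 0 < y) (hz : 0 < a * x + b * y)
    (hab : a + b = 1) :
    a * x / (a * x + b * y) + b * y / (a * x + b * y) = 1 ∧
      a * x / (a * x + b * y) * (c / x) + b * y / (a * x + b * y) * (c / y) =
        c / (a * x + b * y) := by
  constructor
  · field_simp
  · field_simp
    linear_combination c * hab

theorem Convex.setOf_pos_and_div_mem (hs : Convex 𝕜 s) (c : 𝕜) :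
    Convex 𝕜 {x | 0 < x ∧ c / x ∈ s} := by
  rintro x ⟨hx, hxs⟩ y ⟨hy, hys⟩ a b ha hb hab
  have hz : 0 < a * x + b * y := convex_Ioi 0 hx hy ha hb hab
  obtain ⟨hsum, hcombo⟩ := perspective_weights (c := c) hx hy hz hab
  refine ⟨hz, ?_⟩
  simpa only [smul_eq_mul, hcombo] using hs hxs hys (by positivity) (by positivity) hsum

theorem StrictConcaveOn.mul_comp_div {g : 𝕜 → 𝕜} (hg : StrictConcaveOn 𝕜 s g) (hc : c ≠ 0) :
    StrictConcaveOn 𝕜 {x | 0 < x ∧ c / x ∈ s} (fun x => x * g (c / x)) := by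
  refine ⟨hg.1.setOf_pos_and_div_mem c, ?_⟩
  rintro x ⟨hx, hxs⟩ y ⟨hy, hys⟩ hxy a b ha hb hab
  have hz : 0 < a * x + b * y := convex_Ioi 0 hx hy ha.le hb.le hab
  obtain ⟨hsum, hcombo⟩ := perspective_weights (c := c) hx hy hz hab
  set z := a * x + b * y
  have hdiv : c / x ≠ c / y := fun h => hxy <|
    (mul_left_cancel₀ hc ((div_eq_div_iff hx.ne' hy.ne').1 h)).symm
  have key := hg.2 hxs hys hdiv (by positivity : 0 < a * x / z) (by positivity : 0 < b * y / z)
    hsum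
  simp only [smul_eq_mul] at key ⊢
  rw [hcombo] at key
  calc a * (x * g (c / x)) + b * (y * g (c / y))
      = z * (a * x / z * g (c / x) + b * y / z * g (c / y)) := by field_simp
    _ < z * g (c / z) := mul_lt_mul_of_pos_left key hz

end Perspective

theorem strictConcaveOn_mul_log_one_add_div (c : ℝ) (hc : c ≠ 0) :
    StrictConcaveOn ℝ {x : ℝ | 0 < x ∧ 0 < x + c}
      (fun x => x * Real.log (1 + c / x)) := by
  have hdom : {x : ℝ | 0 < x ∧ 0 < x + c} = {x | 0 < x ∧ c / x ∈ (1 + ·) ⁻¹' Ioi 0} :=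
    ext fun x => and_congr_right fun hx => by
      rw [mem_preimage, mem_Ioi, one_add_div hx.ne', div_pos_iff_of_pos_right hx]
  rw [hdom]
  exact (strictConcaveOn_log_Ioi.translate_right 1).mul_comp_div hc
end

section
/- Let (P_n), (Q_n) be sequences of probability measures and suppose that for some measurable random variables L_n = dQ_n/dP_n (likelihood ratios), events B_n, and a finite constant M it holds that limsup_n E_{P_n}[L_n² 1_{B_n}] ≤ M and Q_n(B_nᶜ) → 0. Then for any sequence of events A_n with P_n(A_n) → 0, we have Q_n(A_n) → 0; i.e., (Q_n) is contiguous with respect to (P_n). -/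
/-!
Split `A = (A ∩ B) ∪ (A \ B)`. The part outside `B` has `Q`-mass at most `Q Bᶜ → 0`, and by
Cauchy–Schwarz `Q (A ∩ B) = ∫_{A ∩ B} L dP ≤ (∫_B L² dP)^{1/2} P(A)^{1/2}`, where the first factor
is eventually bounded and the second tends to `0`.
-/

open MeasureTheory Filter
open scoped ENNReal

theorem lintegral_le_sqrt_lintegral_sq_mul_sqrt_measure_univ {α : Type*} [MeasurableSpace α]
    (μ : Measure α) {f : α → ℝ≥0∞} (hf : AEMeasurable f μ) :
    ∫⁻ a, f a ∂μ ≤ (∫⁻ a, f a ^ 2 ∂μ) ^ (1 / 2 : ℝ) * μ Set.univ ^ (1 / 2 : ℝ) := by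
  have h := ENNReal.lintegral_mul_le_Lp_mul_Lq μ Real.HolderConjugate.two_two hf
    (aemeasurable_const (b := (1 : ℝ≥0∞)))
  simp only [Pi.mul_apply, mul_one, ENNReal.one_rpow, lintegral_const, one_mul] at h
  simpa only [ENNReal.rpow_two] using h

theorem withDensity_apply_le_compl_add_sqrt_mul_sqrt {α : Type*} [MeasurableSpace α]
    (μ : Measure α) [SFinite μ] {L : α → ℝ≥0∞} (hL : AEMeasurable L μ) (A B : Set α) :
    μ.withDensity L A ≤
      μ.withDensity L Bᶜ + (∫⁻ a in B, L a ^ 2 ∂μ) ^ (1 / 2 : ℝ) * μ A ^ (1 / 2 : ℝ) := by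
  calc μ.withDensity L A ≤ μ.withDensity L Bᶜ + μ.withDensity L (A ∩ B) :=
        (measure_mono fun x hx => by by_cases hB : x ∈ B <;> simp_all).trans
          (measure_union_le _ _)
    _ ≤ μ.withDensity L Bᶜ +
          (∫⁻ a in A ∩ B, L a ^ 2 ∂μ) ^ (1 / 2 : ℝ) * μ (A ∩ B) ^ (1 / 2 : ℝ) := by
        gcongr
        rw [withDensity_apply', ← Measure.restrict_apply_univ (μ := μ)]
        exact lintegral_le_sqrt_lintegral_sq_mul_sqrt_measure_univ _ hL.restrict
    _ ≤ _ := by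
        gcongr
        exacts [Set.inter_subset_right, Set.inter_subset_left]

theorem ENNReal.tendsto_rpow_mul_rpow_of_limsup_ne_top {ι : Type*} {l : Filter ι}
    {c d : ι → ℝ≥0∞} {r : ℝ} (hr : 0 < r) (hc : limsup c l ≠ ∞)
    (hd : Tendsto d l (nhds 0)) : Tendsto (fun i => c i ^ r * d i ^ r) l (nhds 0) := by
  obtain ⟨K, hcK, hK⟩ := exists_between hc.lt_top
  have hdr : Tendsto (fun i => K ^ r * d i ^ r) l (nhds 0) := by
    simpa [ENNReal.zero_rpow_of_pos hr] using
      ENNReal.Tendsto.const_mul (((ENNReal.continuous_rpow_const (y := r)).tendsto 0).comp hd)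
        (Or.inr (ENNReal.rpow_ne_top_of_nonneg hr.le hK.ne))
  refine tendsto_of_tendsto_of_tendsto_of_le_of_le' tendsto_const_nhds hdr
    (Eventually.of_forall fun _ => zero_le) ?_
  filter_upwards [eventually_lt_of_limsup_lt hcK] with i hi
  gcongr

theorem contiguity_of_bounded_second_moment_general
    {Ω : ℕ → Type*} [∀ n, MeasurableSpace (Ω n)]
    (P Q : ∀ n, Measure (Ω n))
    [∀ n, IsProbabilityMeasure (P n)] [∀ n, IsProbabilityMeasure (Q n)]
    (L : ∀ n, Ω n → ℝ≥0∞) (hLmeas : ∀ n, Measurable (L n))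
    (hL : ∀ n, Q n = (P n).withDensity (L n))
    (B : ∀ n, Set (Ω n))
    (M : ℝ≥0∞) (hM : M ≠ ⊤)
    (hlim : Filter.limsup (fun n => ∫⁻ ω in B n, (L n ω) ^ 2 ∂(P n)) Filter.atTop ≤ M)
    (hB : Filter.Tendsto (fun n => Q n (B n)ᶜ) Filter.atTop (nhds 0)) :
    ∀ A : (n : ℕ) → Set (Ω n), (∀ n, MeasurableSet (A n)) →
      Filter.Tendsto (fun n => P n (A n)) Filter.atTop (nhds 0) →
      Filter.Tendsto (fun n => Q n (A n)) Filter.atTop (nhds 0) := by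
  intro A _ hA
  have hbound : Tendsto (fun n => Q n (B n)ᶜ +
      (∫⁻ ω in B n, L n ω ^ 2 ∂P n) ^ (1 / 2 : ℝ) * P n (A n) ^ (1 / 2 : ℝ)) atTop (nhds 0) := by
    simpa using hB.add (ENNReal.tendsto_rpow_mul_rpow_of_limsup_ne_top (by norm_num)
      (hlim.trans_lt hM.lt_top).ne hA)
  refine tendsto_of_tendsto_of_tendsto_of_le_of_le tendsto_const_nhds hbound
    (fun _ => zero_le) fun n => ?_
  simp only [hL n]
  exact withDensity_apply_le_compl_add_sqrt_mul_sqrt _ (hLmeas n).aemeasurable _ _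

/-- Second-moment criterion for contiguity: if the likelihood ratios `L n = dQ_n/dP_n`
have uniformly bounded second moment on events `B n` with `Q n (B n)ᶜ → 0`, then
`(Q n)` is contiguous with respect to `(P n)`. -/
theorem contiguity_of_bounded_second_moment
    {Ω : ℕ → Type*} [∀ n, MeasurableSpace (Ω n)]
    (P Q : ∀ n, Measure (Ω n))
    [∀ n, IsProbabilityMeasure (P n)] [∀ n, IsProbabilityMeasure (Q n)]
    (L : ∀ n, Ω n → ℝ≥0∞) (hLmeas : ∀ n, Measurable (L n))
    (hL : ∀ n, Q n = (P n).withDensity (L n))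
    (B : ∀ n, Set (Ω n)) (hBmeas : ∀ n, MeasurableSet (B n))
    (M : ℝ≥0∞) (hM : M ≠ ⊤)
    (hlim : Filter.limsup (fun n => ∫⁻ ω in B n, (L n ω) ^ 2 ∂(P n)) Filter.atTop ≤ M)
    (hB : Filter.Tendsto (fun n => Q n (B n)ᶜ) Filter.atTop (nhds 0)) :
    ∀ A : (n : ℕ) → Set (Ω n), (∀ n, MeasurableSet (A n)) →
      Filter.Tendsto (fun n => P n (A n)) Filter.atTop (nhds 0) →
      Filter.Tendsto (fun n => Q n (A n)) Filter.atTop (nhds 0) :=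
  contiguity_of_bounded_second_moment_general P Q L hLmeas hL B M hM hlim hB
end
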